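/- The generating function for hexagonal lattice animals embeddable in a square-lattice strip of height 3 is F(z) = z(1+z)/(1-z); equivalently, there is 1 such hexanimal with 1 cell and exactly 2 with n cells for every n \u2265 2. -/

import Mathlib

/-- Adjacency of hexagonal cells, in axial coordinates: each cell has six neighbours. -/
def HexAdj (a b : ℤ × ℤ) : Prop :=
  b - a ∈ ({(1,0), (-1,0), (0,1), (0,-1), (1,-1), (-1,1)} : Set (ℤ × ℤ))

/-- A hexagonal lattice animal with `n` cells: a nonempty, edge-connected set of `n`
hexagonal cells. -/
def IsHexAnimal (n : ℕ) (S : Finset (ℤ × ℤ)) : Prop :=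
  S.card = n ∧ S.Nonempty ∧
    ∀ a ∈ S, ∀ b ∈ S,
      Relation.ReflTransGen (fun p q => p ∈ S ∧ q ∈ S ∧ HexAdj p q) a b

/-- Translation of a set of cells by a lattice vector. -/
def translateSet (v : ℤ × ℤ) (S : Finset (ℤ × ℤ)) : Finset (ℤ × ℤ) :=
  S.image fun p => p + v

/-- Two sets of cells are equivalent when one is a translate of the other. -/
def TransEquiv (S T : Finset (ℤ × ℤ)) : Prop := ∃ v, translateSet v S = T

/-- The number of hexagonal lattice animals with `n` cells, up to translation. -/
noncomputable def hexCount (n : ℕ) : ℕ :=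
  Nat.card (Quot (fun S T : {S : Finset (ℤ × ℤ) // IsHexAnimal n S} => TransEquiv S.1 T.1))

/-- The doubling map: each hexagonal cell `(x, y)` is replaced by the vertical domino of
the two square cells `(x, x + 2y)` and `(x, x + 2y + 1)`, so adjacent hexagonal columns
are vertically offset by one square unit. -/
def hexToSq (S : Finset (ℤ × ℤ)) : Finset (ℤ × ℤ) :=
  S.biUnion fun p => {(p.1, p.1 + 2 * p.2), (p.1, p.1 + 2 * p.2 + 1)}

/-- A hexagonal animal fits (after translation) in the square-lattice strip `0 ≤ y < k`,
via the domino embedding. -/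
def FitsStrip (k : ℕ) (S : Finset (ℤ × ℤ)) : Prop :=
  ∃ v : ℤ × ℤ, ∀ p ∈ hexToSq (translateSet v S), 0 ≤ p.2 ∧ p.2 < (k : ℤ)

/-- The number of hexagonal lattice animals with `n` cells, up to translation, that are
embeddable in a square-lattice strip of height `k`. -/
noncomputable def stripCount (k n : ℕ) : ℕ :=
  Nat.card (Quot (fun S T : {S : Finset (ℤ × ℤ) // IsHexAnimal n S ∧ FitsStrip k S} =>
    TransEquiv S.1 T.1))

/-!
Under `hexToSq` a cell `p = (x, y)` covers the two squares of column `x` in rows `level p` and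
`level p + 1`, where `level p = x + 2y`. Fitting in a strip of height 3 therefore means that all
levels lie in `{t, t + 1}` for some `t`, and each column contains at most one such cell. Hexagonal
steps change the column by at most one, so a connected animal with `n` cells fills `n` consecutive
columns `m, …, m + n - 1` with exactly one cell each: it is the zigzag `bandChain t m n`.
Translating by `(a, b)` shifts `t` by `a + 2b` and `m` by `a`, so for `n ≥ 2` the parity of
`t - m` is a complete invariant (the zigzag starts with a horizontal or with a slanted step),
giving two classes; for `n = 1` any two single cells are translates.
-/

open Finset

lemma mem_translateSet {v q : ℤ × ℤ} {S : Finset (ℤ × ℤ)} :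
    q ∈ translateSet v S ↔ q - v ∈ S := by
  simp [translateSet, ← sub_eq_add_neg]

lemma translateSet_translateSet (v w : ℤ × ℤ) (S : Finset (ℤ × ℤ)) :
    translateSet w (translateSet v S) = translateSet (v + w) S := by
  ext q
  simp only [mem_translateSet, sub_add_eq_sub_sub_swap]

lemma transEquiv_equivalence : Equivalence TransEquiv where
  refl S := ⟨0, by simp [translateSet]⟩
  symm := by
    rintro S _ ⟨v, rfl⟩
    refine ⟨-v, ?_⟩
    rw [translateSet_translateSet, add_neg_cancel]
    simp [translateSet]
  trans := by
    rintro S _ _ ⟨v, rfl⟩ ⟨w, rfl⟩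
    exact ⟨v + w, (translateSet_translateSet v w S).symm⟩

lemma quot_mk_eq_mk_iff_transEquiv {P : Finset (ℤ × ℤ) → Prop} (S T : {S // P S}) :
    Quot.mk (fun S T : {S // P S} => TransEquiv S.1 T.1) S = Quot.mk _ T ↔
      TransEquiv S.1 T.1 :=
  ⟨fun h => ((transEquiv_equivalence.comap Subtype.val).eqvGen_iff).1 (Quot.eqvGen_exact h),
    fun h => Quot.sound h⟩

lemma transEquiv_of_card_eq_one {S T : Finset (ℤ × ℤ)} (hS : #S = 1) (hT : #T = 1) :
    TransEquiv S T := by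
  obtain ⟨p, rfl⟩ := card_eq_one.1 hS
  obtain ⟨q, rfl⟩ := card_eq_one.1 hT
  exact ⟨q - p, by simp [translateSet]⟩

/-- The bottom square row of the domino of a hexagonal cell under `hexToSq`. -/
def level (p : ℤ × ℤ) : ℤ := p.1 + 2 * p.2

lemma level_add (p q : ℤ × ℤ) : level (p + q) = level p + level q := by
  simp only [level, Prod.fst_add, Prod.snd_add]; ring

lemma mem_hexToSq {q : ℤ × ℤ} {S : Finset (ℤ × ℤ)} :
    q ∈ hexToSq S ↔ ∃ p ∈ S, q.1 = p.1 ∧ (q.2 = level p ∨ q.2 = level p + 1) := by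
  simp only [hexToSq, mem_biUnion, mem_insert, mem_singleton, Prod.ext_iff, level]
  grind

lemma fitsStrip_iff {k : ℕ} {S : Finset (ℤ × ℤ)} :
    FitsStrip k S ↔ ∃ t, ∀ p ∈ S, t ≤ level p ∧ level p + 2 ≤ t + k := by
  simp only [FitsStrip, mem_hexToSq, mem_translateSet]
  constructor
  · rintro ⟨v, hv⟩
    refine ⟨-level v, fun p hp => ?_⟩
    have h₀ := hv (p.1 + v.1, level (p + v)) ⟨p + v, by simpa using hp, rfl, .inl rfl⟩
    have h₁ := hv (p.1 + v.1, level (p + v) + 1) ⟨p + v, by simpa using hp, rfl, .inr rfl⟩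
    simp only [level_add] at h₀ h₁
    omega
  · rintro ⟨t, ht⟩
    refine ⟨(-t, 0), ?_⟩
    rintro q ⟨p, hp, -, hq⟩
    have := ht _ hp
    simp only [level, Prod.fst_sub, Prod.snd_sub] at this hq ⊢
    omega

/-- The unique cell of column `x` whose level is `t` or `t + 1`. -/
def bandCell (t x : ℤ) : ℤ × ℤ := (x, (t - x + 1) / 2)

lemma bandCell_fst_eq_iff {t : ℤ} {p : ℤ × ℤ} :
    bandCell t p.1 = p ↔ t ≤ level p ∧ level p ≤ t + 1 := by
  simp only [bandCell, level, Prod.ext_iff, true_and]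
  omega

lemma fitsStrip_three_iff {S : Finset (ℤ × ℤ)} :
    FitsStrip 3 S ↔ ∃ t, ∀ p ∈ S, bandCell t p.1 = p := by
  simp only [fitsStrip_iff, bandCell_fst_eq_iff]
  grind

lemma hexAdj_iff {p q : ℤ × ℤ} : HexAdj p q ↔
    (q.1 - p.1 = 1 ∧ q.2 - p.2 = 0) ∨ (q.1 - p.1 = -1 ∧ q.2 - p.2 = 0) ∨
    (q.1 - p.1 = 0 ∧ q.2 - p.2 = 1) ∨ (q.1 - p.1 = 0 ∧ q.2 - p.2 = -1) ∨
    (q.1 - p.1 = 1 ∧ q.2 - p.2 = -1) ∨ (q.1 - p.1 = -1 ∧ q.2 - p.2 = 1) := by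
  simp [HexAdj, Prod.ext_iff]

lemma HexAdj.abs_fst_sub_le_one {p q : ℤ × ℤ} (h : HexAdj p q) : |q.1 - p.1| ≤ 1 := by
  rw [hexAdj_iff] at h
  rw [abs_le]
  omega

lemma HexAdj.symm {p q : ℤ × ℤ} (h : HexAdj p q) : HexAdj q p := by
  rw [hexAdj_iff] at h ⊢
  omega

lemma hexAdj_bandCell_add_one (t x : ℤ) : HexAdj (bandCell t x) (bandCell t (x + 1)) := by
  simp only [hexAdj_iff, bandCell]
  omega

lemma Relation.ReflTransGen.exists_apply_eq {α : Type*} {r : α → α → Prop} {P : α → Prop}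
    {f : α → ℤ} (hf : ∀ p q, r p q → |f q - f p| ≤ 1) (hP : ∀ p q, r p q → P q) {a b : α}
    (ha : P a) (hab : Relation.ReflTransGen r a b) {x : ℤ} (hax : f a ≤ x) (hxb : x ≤ f b) :
    ∃ c, P c ∧ f c = x := by
  induction hab with
  | refl => exact ⟨a, ha, le_antisymm hax hxb⟩
  | @tail c d _ hcd ih =>
    by_cases hxc : x ≤ f c
    · exact ih hxc
    · have := abs_le.1 (hf c d hcd)
      exact ⟨d, hP c d hcd, by omega⟩

lemma IsHexAnimal.exists_fst_eq {n : ℕ} {S : Finset (ℤ × ℤ)} (hS : IsHexAnimal n S)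
    {a b : ℤ × ℤ} (ha : a ∈ S) (hb : b ∈ S) {x : ℤ} (hax : a.1 ≤ x) (hxb : x ≤ b.1) :
    ∃ c ∈ S, c.1 = x :=
  (hS.2.2 a ha b hb).exists_apply_eq (fun _ _ h => h.2.2.abs_fst_sub_le_one)
    (fun _ _ h => h.2.1) ha hax hxb

lemma Finset.eq_Ico_min'_of_Icc_subset {X : Finset ℤ} (hX : X.Nonempty)
    (h : ∀ a ∈ X, ∀ b ∈ X, Icc a b ⊆ X) : X = Ico (X.min' hX) (X.min' hX + #X) := by
  set m := X.min' hX
  set M := X.max' hX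
  have hX_eq : X = Icc m M := Subset.antisymm
    (fun x hx => mem_Icc.2 ⟨min'_le X x hx, le_max' X x hx⟩)
    (h m (min'_mem X hX) M (max'_mem X hX))
  have hcard : (#X : ℤ) = M + 1 - m := by
    rw [hX_eq, Int.card_Icc]
    have := min'_le_max' X hX
    omega
  ext x
  conv_lhs => rw [hX_eq]
  simp only [mem_Icc, mem_Ico]
  omega

noncomputable def bandChain (t m : ℤ) (n : ℕ) : Finset (ℤ × ℤ) :=
  (Ico m (m + n)).image (bandCell t)

lemma bandCell_injective (t : ℤ) : Function.Injective (bandCell t) :=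
  fun _ _ h => congrArg Prod.fst h

lemma mem_bandChain {t m : ℤ} {n : ℕ} {p : ℤ × ℤ} :
    p ∈ bandChain t m n ↔ m ≤ p.1 ∧ p.1 < m + n ∧ bandCell t p.1 = p := by
  simp only [bandChain, mem_image, mem_Ico]
  constructor
  · rintro ⟨x, hx, rfl⟩
    exact ⟨hx.1, hx.2, rfl⟩
  · rintro ⟨h₁, h₂, h⟩
    exact ⟨p.1, ⟨h₁, h₂⟩, h⟩

lemma card_bandChain (t m : ℤ) (n : ℕ) : #(bandChain t m n) = n := by
  rw [bandChain, card_image_of_injective _ (bandCell_injective t), Int.card_Ico]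
  omega

lemma bandChain_fitsStrip_three (t m : ℤ) (n : ℕ) : FitsStrip 3 (bandChain t m n) :=
  fitsStrip_three_iff.2 ⟨t, fun _ hp => (mem_bandChain.1 hp).2.2⟩

lemma bandChain_isHexAnimal {t m : ℤ} {n : ℕ} (hn : n ≠ 0) : IsHexAnimal n (bandChain t m n) := by
  set C := bandChain t m n
  let R := fun p q => p ∈ C ∧ q ∈ C ∧ HexAdj p q
  have : Std.Symm R := ⟨fun _ _ h => ⟨h.2.1, h.1, h.2.2.symm⟩⟩
  have hmem : ∀ x, m ≤ x → x < m + n → bandCell t x ∈ C := fun x h₁ h₂ =>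
    mem_image_of_mem _ (mem_Ico.2 ⟨h₁, h₂⟩)
  have hfrom_m : ∀ x, m ≤ x → x < m + n →
      Relation.ReflTransGen R (bandCell t m) (bandCell t x) := by
    intro x hx
    induction x, hx using Int.leInduction with
    | base => exact fun _ => .refl
    | succ x hx ih =>
      exact fun hxn => (ih (by omega)).tail
        ⟨hmem x hx (by omega), hmem (x + 1) (by omega) hxn, hexAdj_bandCell_add_one t x⟩
  refine ⟨card_bandChain t m n, ⟨bandCell t m, hmem m le_rfl (by omega)⟩, fun a ha b hb => ?_⟩
  obtain ⟨ha₁, ha₂, ha⟩ := mem_bandChain.1 ha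
  obtain ⟨hb₁, hb₂, hb⟩ := mem_bandChain.1 hb
  rw [← ha, ← hb]
  exact (Std.Symm.symm _ _ (hfrom_m _ ha₁ ha₂)).trans (hfrom_m _ hb₁ hb₂)

lemma translateSet_bandChain (t m a b : ℤ) (n : ℕ) :
    translateSet (a, b) (bandChain t m n) = bandChain (t + a + 2 * b) (m + a) n := by
  ext q
  simp only [mem_translateSet, mem_bandChain, bandCell, Prod.ext_iff, Prod.fst_sub, Prod.snd_sub]
  constructor <;> rintro ⟨h₁, h₂, -, h₃⟩ <;> refine ⟨by omega, by omega, trivial, by omega⟩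

lemma bandChain_inj {t t' m m' : ℤ} {n : ℕ} (hn : 2 ≤ n)
    (h : bandChain t m n = bandChain t' m' n) : t = t' ∧ m = m' := by
  have hmem : ∀ x, m ≤ x → x < m + n → bandCell t x ∈ bandChain t' m' n := fun x h₁ h₂ =>
    h ▸ mem_bandChain.2 ⟨h₁, h₂, rfl⟩
  have hm' : bandCell t' m' ∈ bandChain t m n := by
    rw [h]
    exact mem_bandChain.2 ⟨le_rfl, by simp only [bandCell]; omega, rfl⟩
  replace hm' := (mem_bandChain.1 hm').1
  have h₀ := mem_bandChain.1 (hmem m le_rfl (by omega))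
  have h₁ := mem_bandChain.1 (hmem (m + 1) (by omega) (by omega))
  simp only [bandCell, Prod.ext_iff] at hm' h₀ h₁
  omega

lemma transEquiv_bandChain_iff {t t' m m' : ℤ} {n : ℕ} (hn : 2 ≤ n) :
    TransEquiv (bandChain t m n) (bandChain t' m' n) ↔ (t - m) % 2 = (t' - m') % 2 := by
  constructor
  · rintro ⟨⟨a, b⟩, h⟩
    rw [translateSet_bandChain] at h
    have := bandChain_inj hn h
    omega
  · intro h
    refine ⟨(m' - m, (t' - t - (m' - m)) / 2), ?_⟩
    rw [translateSet_bandChain]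
    congr 1 <;> omega

lemma IsHexAnimal.eq_bandChain {n : ℕ} {S : Finset (ℤ × ℤ)} {t : ℤ} (hS : IsHexAnimal n S)
    (ht : ∀ p ∈ S, bandCell t p.1 = p) : ∃ m, S = bandChain t m n := by
  set X := S.image Prod.fst
  have hX : X.Nonempty := hS.2.1.image _
  have hS_eq : S = X.image (bandCell t) := by
    rw [image_image]
    exact (image_congr fun p hp => ht p hp).trans image_id' |>.symm
  have hX_card : #X = n :=
    (card_image_of_injOn fun p hp q hq e => by rw [← ht p hp, ← ht q hq]; exact congrArg _ e).trans
      hS.1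
  have hX_conv : ∀ a ∈ X, ∀ b ∈ X, Icc a b ⊆ X := by
    intro _ ha _ hb x hx
    obtain ⟨p, hp, rfl⟩ := mem_image.1 ha
    obtain ⟨q, hq, rfl⟩ := mem_image.1 hb
    obtain ⟨c, hc, rfl⟩ := hS.exists_fst_eq hp hq (mem_Icc.1 hx).1 (mem_Icc.1 hx).2
    exact mem_image_of_mem _ hc
  refine ⟨X.min' hX, ?_⟩
  rw [hS_eq, bandChain, ← hX_card, ← eq_Ico_min'_of_Icc_subset hX hX_conv]

/-- The generating function for hexagonal lattice animals embeddable in a square-lattice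
strip of height 3 is `F(z) = z(1+z)/(1-z)`: there is 1 such hexanimal with 1 cell and
exactly 2 with `n` cells for every `n ≥ 2`. -/
theorem stripCount_three : stripCount 3 1 = 1 ∧ ∀ n : ℕ, 2 ≤ n → stripCount 3 n = 2 := by
  refine ⟨?_, fun n hn => ?_⟩
  · rw [stripCount, Nat.card_eq_one_iff_unique]
    refine ⟨⟨Quot.ind fun S => Quot.ind fun T => Quot.sound ?_⟩,
      ⟨Quot.mk _ ⟨bandChain 0 0 1, bandChain_isHexAnimal one_ne_zero,
        bandChain_fitsStrip_three ..⟩⟩⟩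
    exact transEquiv_of_card_eq_one S.2.1.1 T.2.1.1
  · rw [stripCount, Nat.card_eq_two_iff]
    let chain (t : ℤ) : {S // IsHexAnimal n S ∧ FitsStrip 3 S} :=
      ⟨bandChain t 0 n, bandChain_isHexAnimal (by omega), bandChain_fitsStrip_three ..⟩
    refine ⟨Quot.mk _ (chain 0), Quot.mk _ (chain 1), ?_, ?_⟩
    · rw [Ne, quot_mk_eq_mk_iff_transEquiv, transEquiv_bandChain_iff hn]
      decide
    · refine Set.eq_univ_of_forall (Quot.ind fun S => ?_)
      obtain ⟨t, ht⟩ := fitsStrip_three_iff.1 S.2.2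
      obtain ⟨m, hS⟩ := S.2.1.eq_bandChain ht
      simp only [Set.mem_insert_iff, Set.mem_singleton_iff, quot_mk_eq_mk_iff_transEquiv, chain, hS,
        transEquiv_bandChain_iff hn]
      omega
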